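/- Let H be a real Hilbert space, T : H → H a bounded self-adjoint operator, v ∈ H, and let ν be a spectral measure of T at v. Then for every w ∈ H there exists a function ĥ ∈ L²(ν) such that ⟪T^k v, w⟫ = ∫ t^k ĥ(t) dν(t) for every integer k ≥ 0. -/

import Mathlib

/-!
For polynomials `p, q`, self-adjointness and the moment hypothesis give
`⟪p(T) v, q(T) v⟫ = ⟪(q p)(T) v, v⟫ = ∫ p q dν`, so `p(T) v ↦ p` is an isometry onto
the polynomials in `L²(ν)`. Hence `p ↦ ⟪p(T) v, w⟫` is bounded by `‖w‖` in the `L²(ν)`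
norm on the polynomials; a Hahn–Banach extension to `L²(ν)`, represented by Riesz, is `ĥ`.
-/

open MeasureTheory RealInnerProductSpace Polynomial

theorem Continuous.memLp_of_measure_compl_eq_zero {X E : Type*} [TopologicalSpace X]
    [MeasurableSpace X] [OpensMeasurableSpace X] [NormedAddCommGroup E]
    [SecondCountableTopologyEither X E] {μ : Measure X} [IsFiniteMeasure μ] {K : Set X}
    (hK : IsCompact K) (hμK : μ Kᶜ = 0) {f : X → E} (hf : Continuous f) (p : ENNReal) :
    MemLp f p μ := by
  obtain ⟨C, hC⟩ := hK.exists_bound_of_continuousOn hf.continuousOn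
  exact .of_bound hf.aestronglyMeasurable C (measure_eq_zero_iff_ae_notMem.1 hμK |>.mono
    fun x hx => hC x (not_not.1 hx))

noncomputable def polynomialToLp {r : ENNReal} (ν : Measure ℝ)
    (hmem : ∀ p : ℝ[X], MemLp (fun t => p.eval t) r ν) : ℝ[X] →ₗ[ℝ] Lp ℝ r ν where
  toFun p := (hmem p).toLp
  map_add' p q := by
    simp_rw [← MemLp.toLp_add]
    exact MemLp.toLp_congr _ _ (.of_forall fun t => eval_add)
  map_smul' c p := by
    simp_rw [RingHom.id_apply, ← MemLp.toLp_const_smul]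
    exact MemLp.toLp_congr _ _ (.of_forall fun t => eval_smul ..)

theorem polynomialToLp_apply {r : ENNReal} {ν : Measure ℝ}
    (hmem : ∀ p : ℝ[X], MemLp (fun t => p.eval t) r ν) (p : ℝ[X]) :
    polynomialToLp ν hmem p = (hmem p).toLp :=
  rfl

theorem inner_polynomialToLp_left {ν : Measure ℝ}
    (hmem : ∀ p : ℝ[X], MemLp (fun t => p.eval t) 2 ν) (p : ℝ[X]) (g : Lp ℝ 2 ν) :
    ⟪polynomialToLp ν hmem p, g⟫ = ∫ t, p.eval t * g t ∂ν := by
  rw [L2.inner_def]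
  refine integral_congr_ae ?_
  filter_upwards [(hmem p).coeFn_toLp] with t ht
  rw [polynomialToLp_apply, ht, RCLike.inner_apply', conj_trivial]

theorem inner_polynomialToLp {ν : Measure ℝ}
    (hmem : ∀ p : ℝ[X], MemLp (fun t => p.eval t) 2 ν) (p q : ℝ[X]) :
    ⟪polynomialToLp ν hmem p, polynomialToLp ν hmem q⟫ =
      ∫ t, p.eval t * q.eval t ∂ν := by
  rw [inner_polynomialToLp_left]
  refine integral_congr_ae ?_
  filter_upwards [(hmem q).coeFn_toLp] with t ht
  rw [polynomialToLp_apply, ht]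

theorem IsSelfAdjoint.aeval_real {A : Type*} [Ring A] [StarRing A] [Algebra ℝ A]
    [StarModule ℝ A] {a : A} (ha : IsSelfAdjoint a) (p : ℝ[X]) : IsSelfAdjoint (aeval a p) := by
  induction p using Polynomial.induction_on' with
  | add p q hp hq => simpa only [map_add] using hp.add hq
  | monomial n c =>
    rw [aeval_monomial, ← Algebra.smul_def]
    exact (IsSelfAdjoint.all c).smul (ha.pow n)

section Moments

variable {H : Type*} [NormedAddCommGroup H] [InnerProductSpace ℝ H] {T : H →L[ℝ] H} {v : H}
  {ν : Measure ℝ}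

theorem inner_aeval_self_eq_integral (hint : ∀ p : ℝ[X], Integrable (fun t => p.eval t) ν)
    (hv : ∀ k : ℕ, ⟪(T ^ k) v, v⟫ = ∫ t, t ^ k ∂ν) (p : ℝ[X]) :
    ⟪aeval T p v, v⟫ = ∫ t, p.eval t ∂ν := by
  induction p using Polynomial.induction_on' with
  | add p q hp hq =>
    simp only [map_add, add_apply, inner_add_left, eval_add,
      integral_add (hint p) (hint q), hp, hq]
  | monomial n c =>
    simp only [aeval_monomial, ← Algebra.smul_def, smul_apply,
      real_inner_smul_left, hv, eval_monomial, integral_const_mul]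

theorem inner_aeval_aeval_eq_integral [CompleteSpace H] (hT : IsSelfAdjoint T)
    (hint : ∀ p : ℝ[X], Integrable (fun t => p.eval t) ν)
    (hv : ∀ k : ℕ, ⟪(T ^ k) v, v⟫ = ∫ t, t ^ k ∂ν) (p q : ℝ[X]) :
    ⟪aeval T p v, aeval T q v⟫ = ∫ t, p.eval t * q.eval t ∂ν := by
  have hsymm := (hT.aeval_real q).isSymmetric (aeval T p v) v
  simp only [ContinuousLinearMap.coe_coe] at hsymm
  rw [← hsymm, ← mul_apply_eq_comp, ← map_mul, inner_aeval_self_eq_integral hint hv]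
  simp only [eval_mul, mul_comm]

end Moments

theorem exists_inner_eq_of_abs_le_mul_norm {E F : Type*} [AddCommGroup E] [Module ℝ E]
    [NormedAddCommGroup F] [InnerProductSpace ℝ F] [CompleteSpace F] (M : E →ₗ[ℝ] F)
    (f : E →ₗ[ℝ] ℝ) (C : ℝ) (hf : ∀ x, |f x| ≤ C * ‖M x‖) :
    ∃ h : F, ∀ x, f x = ⟪M x, h⟫ := by
  -- `f` kills `ker M`, so it factors through any right inverse `s` of `M` onto its range.
  obtain ⟨s, hs⟩ := M.rangeRestrict.exists_rightInverse_of_surjective M.range_rangeRestrict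
  have hsM : ∀ x, f (s (M.rangeRestrict x)) = f x := by
    intro x
    have hMx : M (s (M.rangeRestrict x)) = M x :=
      congr_arg Subtype.val (LinearMap.congr_fun hs (M.rangeRestrict x))
    have := hf (s (M.rangeRestrict x) - x)
    rw [map_sub M, hMx, sub_self, norm_zero, mul_zero, abs_nonpos_iff, map_sub, sub_eq_zero] at this
    exact this
  let g : StrongDual ℝ (LinearMap.range M) := (f ∘ₗ s).mkContinuous C fun y => by
    have hy : M (s y) = y := congr_arg Subtype.val (LinearMap.congr_fun hs y)
    simpa [hy] using hf (s y)
  obtain ⟨G, hG, -⟩ := exists_extension_norm_eq _ g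
  refine ⟨(InnerProductSpace.toDual ℝ F).symm G, fun x => ?_⟩
  rw [real_inner_comm, InnerProductSpace.toDual_symm_apply, ← hsM x]
  exact (hG (M.rangeRestrict x)).symm

theorem exists_inner_eq_of_norm_le {E H F : Type*} [AddCommGroup E] [Module ℝ E]
    [NormedAddCommGroup H] [InnerProductSpace ℝ H]
    [NormedAddCommGroup F] [InnerProductSpace ℝ F] [CompleteSpace F] (A : E →ₗ[ℝ] H)
    (M : E →ₗ[ℝ] F) (hAM : ∀ x, ‖A x‖ ≤ ‖M x‖) (w : H) :
    ∃ h : F, ∀ x, ⟪A x, w⟫ = ⟪M x, h⟫ := by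
  simpa [real_inner_comm w] using
    exists_inner_eq_of_abs_le_mul_norm M (innerₛₗ ℝ w ∘ₗ A) ‖w‖ fun x => by
      simpa [real_inner_comm w, mul_comm] using
        (abs_real_inner_le_norm (A x) w).trans (mul_le_mul_of_nonneg_right (hAM x) (norm_nonneg w))

/-- Lemma 4.2 (Hilbert-space form): if `ν` is a spectral measure of the bounded self-adjoint
operator `T` at `v`, then for every `w ∈ H` there is `hhat ∈ L²(ν)` with
`⟪T^k v, w⟫ = ∫ t^k hhat dν` for every `k ≥ 0`. -/
theorem stmt6 {H : Type*} [NormedAddCommGroup H] [InnerProductSpace ℝ H] [CompleteSpace H]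
    (T : H →L[ℝ] H) (hT : IsSelfAdjoint T) (v : H)
    (ν : Measure ℝ) [IsFiniteMeasure ν]
    (R : ℝ) (hνsupp : ν (Set.Icc (-R) R)ᶜ = 0)
    (hv : ∀ k : ℕ, ⟪(T ^ k) v, v⟫ = ∫ t, t ^ k ∂ν)
    (w : H) :
    ∃ hhat : ℝ → ℝ, MemLp hhat 2 ν ∧
      ∀ k : ℕ, ⟪(T ^ k) v, w⟫ = ∫ t, t ^ k * hhat t ∂ν := by
  have hmem : ∀ p : ℝ[X], MemLp (fun t => p.eval t) 2 ν := fun p =>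
    p.continuous.memLp_of_measure_compl_eq_zero isCompact_Icc hνsupp 2
  have hint : ∀ p : ℝ[X], Integrable (fun t => p.eval t) ν := fun p =>
    (hmem p).integrable one_le_two
  let A : ℝ[X] →ₗ[ℝ] H :=
    (ContinuousLinearMap.apply ℝ H v).toLinearMap ∘ₗ (aeval T).toLinearMap
  have hAM : ∀ p, ‖A p‖ = ‖polynomialToLp ν hmem p‖ := fun p => by
    rw [norm_eq_sqrt_real_inner, norm_eq_sqrt_real_inner, inner_polynomialToLp]
    exact congrArg Real.sqrt (inner_aeval_aeval_eq_integral hT hint hv p p)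
  obtain ⟨h, hh⟩ := exists_inner_eq_of_norm_le A _ (fun p => (hAM p).le) w
  refine ⟨h, Lp.memLp h, fun k => ?_⟩
  simpa [A, inner_polynomialToLp_left] using hh (X ^ k)
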